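/- arXiv:2506.12352 — 2 statements merged into one kernel-verified Lean document; each statement's English description precedes it below -/
import Mathlib

section
/- Let L(α) = m(ln α − ln(α + s)) + t/(α + s) with s > 0, m > 0, t ≥ 0, defined for α > 0. If η := t − m s > 0, then α* = m s²/η is the unique global maximizer of L on (0, ∞). -/
noncomputable def L (m s t α : ℝ) : ℝ :=
  m * (Real.log α - Real.log (α + s)) + t / (α + s)

/-!
Writing `u = α / (α + s) ∈ (0, 1)`, one has `t / (α + s) = (t / s) (1 - u)`, so
`L α = m log u - (t / s) u + t / s`. This strictly concave function of `u` peaks at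
`u₀ = m s / t`, by `log x < x - 1` applied to `x = u / u₀`; and `u = u₀` exactly at
`α = m s² / (t - m s)`.
-/

open Real

lemma mul_log_sub_div_mul_lt {c u u₀ : ℝ} (hc : 0 < c) (hu : 0 < u) (hu₀ : 0 < u₀)
    (hne : u ≠ u₀) : c * log u - c / u₀ * u < c * log u₀ - c := by
  have hlog : log (u / u₀) < u / u₀ - 1 :=
    log_lt_sub_one_of_pos (div_pos hu hu₀) (fun h => hne ((div_eq_one_iff_eq hu₀.ne').mp h))
  rw [log_div hu.ne' hu₀.ne'] at hlog
  have : c / u₀ * u = c * (u / u₀) := by ring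
  rw [this]
  nlinarith

lemma div_add_eq_div_add_iff {a b s : ℝ} (hs : s ≠ 0) (ha : a + s ≠ 0) (hb : b + s ≠ 0) :
    a / (a + s) = b / (b + s) ↔ a = b := by
  rw [div_eq_div_iff ha hb]
  constructor
  · intro h
    exact mul_right_cancel₀ hs (by linarith)
  · rintro rfl
    rfl

lemma L_eq_of_pos {m s t α : ℝ} (hs : 0 < s) (hα : 0 < α) :
    L m s t α = m * log (α / (α + s)) - t / s * (α / (α + s)) + t / s := by
  have hαs : α + s ≠ 0 := by positivity
  rw [L, log_div hα.ne' hαs]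
  field_simp
  ring

theorem unique_global_max_general (m s t : ℝ) (hm : 0 < m) (hs : 0 < s)
    (hη : 0 < t - m * s) :
    ∀ α : ℝ, 0 < α → α ≠ m * s ^ 2 / (t - m * s) →
      L m s t α < L m s t (m * s ^ 2 / (t - m * s)) := by
  intro α hα hne
  set β := m * s ^ 2 / (t - m * s)
  have ht : 0 < t := by nlinarith
  have hβ : 0 < β := by positivity
  have hβ_ratio : β / (β + s) = m * s / t := by
    simp only [β]
    field_simp
    ring
  have hslope : t / s = m / (m * s / t) := by
    field_simp
  have hratio_ne : α / (α + s) ≠ β / (β + s) :=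
    (div_add_eq_div_add_iff hs.ne' (by positivity) (by positivity)).not.mpr hne
  rw [L_eq_of_pos hs hα, L_eq_of_pos hs hβ, hβ_ratio, hslope]
  rw [hβ_ratio] at hratio_ne
  have hpeak := mul_log_sub_div_mul_lt hm (by positivity) (by positivity) hratio_ne
  have hslope_peak : m / (m * s / t) * (m * s / t) = m := by field_simp
  linarith

theorem unique_global_max (m s t : ℝ) (hm : 0 < m) (hs : 0 < s) (ht : 0 ≤ t)
    (hη : 0 < t - m * s) :
    ∀ α : ℝ, 0 < α → α ≠ m * s ^ 2 / (t - m * s) →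
      L m s t α < L m s t (m * s ^ 2 / (t - m * s)) :=
  unique_global_max_general m s t hm hs hη
end

section
/- With S = XXᵀ + K (K symmetric positive definite), C = I + XᵀK⁻¹X, and μ = Y Xᵀ S⁻¹, one has Y C⁻¹ Yᵀ = (Y − μX)(Y − μX)ᵀ + μ K μᵀ. -/
open Matrix

theorem YCinvYt {d N m : ℕ}
    (X : Matrix (Fin d) (Fin N) ℝ) (Y : Matrix (Fin m) (Fin N) ℝ)
    (K : Matrix (Fin d) (Fin d) ℝ) (hK : K.PosDef) :
    Y * ((1 : Matrix (Fin N) (Fin N) ℝ) + Xᵀ * K⁻¹ * X)⁻¹ * Yᵀ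
      = (Y - (Y * Xᵀ * (X * Xᵀ + K)⁻¹) * X) * (Y - (Y * Xᵀ * (X * Xᵀ + K)⁻¹) * X)ᵀ
        + (Y * Xᵀ * (X * Xᵀ + K)⁻¹) * K * (Y * Xᵀ * (X * Xᵀ + K)⁻¹)ᵀ := by
  have hS : (X * Xᵀ + K).PosDef := by
    have hX : (X * Xᵀ).PosSemidef := by
      simpa using posSemidef_self_mul_conjTranspose X
    exact Matrix.PosDef.posSemidef_add hX hK
  have hSdetu : IsUnit (X * Xᵀ + K).det := isUnit_iff_ne_zero.mpr hS.det_pos.ne'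
  have hKdetu : IsUnit K.det := isUnit_iff_ne_zero.mpr hK.det_pos.ne'
  have hS1 : (X * Xᵀ + K) * (X * Xᵀ + K)⁻¹ = 1 := mul_nonsing_inv _ hSdetu
  have hK1 : K⁻¹ * K = 1 := nonsing_inv_mul _ hKdetu
  have hKt : Kᵀ = K := by
    rw [← conjTranspose_eq_transpose_of_trivial]; exact hK.isHermitian.eq
  have hSt : (X * Xᵀ + K)ᵀ = X * Xᵀ + K := by
    rw [transpose_add, transpose_mul, transpose_transpose, hKt]
  have hWt : ((X * Xᵀ + K)⁻¹)ᵀ = (X * Xᵀ + K)⁻¹ := by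
    rw [transpose_nonsing_inv, hSt]
  set W := (X * Xᵀ + K)⁻¹ with hW
  -- key relation: (X Xᵀ) W = 1 - K W
  have hXXW : X * Xᵀ * W = 1 - K * W := by
    have : (X * Xᵀ + K) * W = X * Xᵀ * W + K * W := Matrix.add_mul _ _ _
    rw [this] at hS1
    linear_combination (norm := abel) hS1
  -- Woodbury
  have hCinv : ((1 : Matrix (Fin N) (Fin N) ℝ) + Xᵀ * K⁻¹ * X)⁻¹
      = 1 - Xᵀ * W * X := by
    apply inv_eq_right_inv
    have e1 : X * (Xᵀ * W * X) = X - K * (W * X) := by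
      rw [← Matrix.mul_assoc, ← Matrix.mul_assoc, hXXW, Matrix.sub_mul,
        Matrix.one_mul, Matrix.mul_assoc]
    have e2 : Xᵀ * K⁻¹ * X * (Xᵀ * W * X) = Xᵀ * (K⁻¹ * X) - Xᵀ * (W * X) := by
      rw [Matrix.mul_assoc (Xᵀ * K⁻¹) X, e1, Matrix.mul_sub, Matrix.mul_assoc Xᵀ K⁻¹,
        Matrix.mul_assoc Xᵀ K⁻¹ (K * (W * X)),
        ← Matrix.mul_assoc K⁻¹ K (W * X), hK1, Matrix.one_mul]
    rw [Matrix.mul_sub, Matrix.mul_one, Matrix.add_mul, Matrix.one_mul, e2]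
    have e3 : Xᵀ * K⁻¹ * X = Xᵀ * (K⁻¹ * X) := Matrix.mul_assoc _ _ _
    have e4 : Xᵀ * W * X = Xᵀ * (W * X) := Matrix.mul_assoc _ _ _
    rw [e3, e4]
    abel
  rw [hCinv]
  -- transposes on RHS
  have hμt : (Y * Xᵀ * W)ᵀ = W * (X * Yᵀ) := by
    rw [transpose_mul, transpose_mul, hWt, transpose_transpose]
  have hsubt : (Y - Y * Xᵀ * W * X)ᵀ = Yᵀ - Xᵀ * (W * (X * Yᵀ))ᵀᵀ := by
    rw [transpose_sub, transpose_mul, hμt, transpose_transpose]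
  -- key relation for RHS
  have key : X * (Xᵀ * (W * (X * Yᵀ))) + K * (W * (X * Yᵀ)) = X * Yᵀ := by
    have h1 : X * (Xᵀ * (W * (X * Yᵀ))) = (X * Xᵀ * W) * (X * Yᵀ) := by
      rw [Matrix.mul_assoc (X * Xᵀ) W, Matrix.mul_assoc]
    rw [h1, hXXW, Matrix.sub_mul, Matrix.one_mul, Matrix.mul_assoc]
    abel
  -- expand RHS
  have hRHS : (Y - Y * Xᵀ * W * X) * (Y - Y * Xᵀ * W * X)ᵀ + Y * Xᵀ * W * K * (Y * Xᵀ * W)ᵀ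
      = Y * Yᵀ - Y * (Xᵀ * (W * (X * Yᵀ))) := by
    rw [hsubt, transpose_transpose, hμt]
    rw [Matrix.sub_mul, Matrix.mul_sub, Matrix.mul_sub]
    have a1 : Y * Xᵀ * W * X * Yᵀ = Y * (Xᵀ * (W * (X * Yᵀ))) := by
      rw [Matrix.mul_assoc, Matrix.mul_assoc, Matrix.mul_assoc]
    have a2 : Y * (Xᵀ * (W * (X * Yᵀ))) = Y * Xᵀ * (W * (X * Yᵀ)) := by
      rw [Matrix.mul_assoc]
    have a3 : Y * Xᵀ * W * X * (Xᵀ * (W * (X * Yᵀ)))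
        = Y * Xᵀ * (W * (X * (Xᵀ * (W * (X * Yᵀ))))) := by
      rw [Matrix.mul_assoc (Y * Xᵀ * W) X, Matrix.mul_assoc (Y * Xᵀ) W]
    have a4 : Y * Xᵀ * W * K * (W * (X * Yᵀ))
        = Y * Xᵀ * (W * (K * (W * (X * Yᵀ)))) := by
      rw [Matrix.mul_assoc (Y * Xᵀ * W) K, Matrix.mul_assoc (Y * Xᵀ) W]
    rw [a1, a3, a4]
    have a5 : Y * Xᵀ * (W * (X * (Xᵀ * (W * (X * Yᵀ))))) + Y * Xᵀ * (W * (K * (W * (X * Yᵀ))))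
        = Y * Xᵀ * (W * (X * Yᵀ)) := by
      rw [← Matrix.mul_add, ← Matrix.mul_add, key]
    linear_combination (norm := abel) (a5.trans a2.symm)
  rw [hRHS]
  simp only [Matrix.mul_sub, Matrix.sub_mul, Matrix.mul_assoc, Matrix.mul_one, Matrix.one_mul]
end
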